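/- arXiv:2106.11862 — 3 statements merged into one kernel-verified Lean document; each statement's English description precedes it below -/
import Mathlib

section
/- For every real a ≥ 0 and every real b with 0 ≤ b ≤ 1, log(1+ab) ≥ log(1+a)·log(1+b). -/
theorem log_one_add_mul_ge (a b : ℝ) (ha : 0 ≤ a) (hb0 : 0 ≤ b) (hb1 : b ≤ 1) :
    Real.log (1 + a) * Real.log (1 + b) ≤ Real.log (1 + a * b) := by
  have h1a : (0:ℝ) < 1 + a := by linarith
  have hlb : Real.log (1 + b) ≤ b := by
    have := Real.log_le_sub_one_of_pos (x := 1 + b) (by linarith)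
    linarith
  have hla : 0 ≤ Real.log (1 + a) := Real.log_nonneg (by linarith)
  have step1 : Real.log (1 + a) * Real.log (1 + b) ≤ Real.log (1 + a) * b :=
    mul_le_mul_of_nonneg_left hlb hla
  have bern : (1 + a) ^ b ≤ 1 + a * b := by
    have := rpow_one_add_le_one_add_mul_self (s := a) (by linarith) hb0 hb1
    linarith [this]
  have step2 : Real.log (1 + a) * b ≤ Real.log (1 + a * b) := by
    have h := Real.log_le_log (Real.rpow_pos_of_pos h1a b) bern
    rwa [Real.log_rpow h1a, mul_comm] at h
  linarith
end

section
/- Let h : ℝ → ℝ be nonnegative, integrable on [0,∞), and continuous at 0. Let M > 0 and let M_η (η > 0) be real numbers with M_η → M as η → ∞. Then lim_{η→∞} η·∫_0^∞ log(1+M_η·e^{−ηt})·h(t) dt = h(0)·∫_0^∞ log(1+M·e^{−t}) dt. -/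
/-!
Substituting `s = η t`, the kernels `t ↦ η log (1 + M_η e^{-η t}) / C`, with
`C = ∫_0^∞ log (1 + M e^{-s}) ds > 0`, form a family of peak functions at `0`: their mass on
`(0, 1]` is `C⁻¹ ∫_0^η log (1 + M_η e^{-s}) ds → 1` by dominated convergence (the integrand is at
most `M_η e^{-s}`), and on `[δ, ∞)` they are uniformly `O(η e^{-δη}) → 0`. Integrating such kernels
against a function integrable on `(0, ∞)` and continuous at `0` tends to its value at `0`.
-/

open MeasureTheory Filter Set Topology Real

section LogOneAddMulExpNeg

variable {a : ℝ}

lemma log_one_add_mul_exp_neg_nonneg (ha : 0 ≤ a) (s : ℝ) : 0 ≤ log (1 + a * exp (-s)) :=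
  log_nonneg (le_add_of_nonneg_right (by positivity))

lemma log_one_add_mul_exp_neg_pos (ha : 0 < a) (s : ℝ) : 0 < log (1 + a * exp (-s)) :=
  log_pos (lt_add_of_pos_right 1 (by positivity))

lemma log_one_add_mul_exp_neg_le (ha : 0 ≤ a) (s : ℝ) : log (1 + a * exp (-s)) ≤ a * exp (-s) := by
  have := log_le_sub_one_of_pos (show 0 < 1 + a * exp (-s) by positivity)
  linarith

lemma continuous_log_one_add_mul_exp_neg (ha : 0 ≤ a) :
    Continuous fun s => log (1 + a * exp (-s)) :=
  (by fun_prop : Continuous fun s => 1 + a * exp (-s)).log fun s => by positivity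

lemma integrableOn_log_one_add_mul_exp_neg (ha : 0 ≤ a) :
    IntegrableOn (fun s => log (1 + a * exp (-s))) (Ioi 0) := by
  refine ((integrableOn_exp_neg_Ioi 0).const_mul a).mono'
    (continuous_log_one_add_mul_exp_neg ha).aestronglyMeasurable (ae_of_all _ fun s => ?_)
  rw [norm_of_nonneg (log_one_add_mul_exp_neg_nonneg ha s)]
  exact log_one_add_mul_exp_neg_le ha s

lemma integral_log_one_add_mul_exp_neg_pos (ha : 0 < a) :
    0 < ∫ s in Ioi 0, log (1 + a * exp (-s)) := by
  rw [setIntegral_pos_iff_support_of_nonneg_ae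
    (ae_of_all _ fun s => log_one_add_mul_exp_neg_nonneg ha.le s)
    (integrableOn_log_one_add_mul_exp_neg ha.le)]
  have : Function.support (fun s => log (1 + a * exp (-s))) = univ :=
    eq_univ_of_forall fun s => (log_one_add_mul_exp_neg_pos ha s).ne'
  simp [this]

end LogOneAddMulExpNeg

lemma tendsto_intervalIntegral_log_one_add_mul_exp_neg {ι : Type*} {l : Filter ι}
    [l.IsCountablyGenerated] [l.NeBot] {a b : ι → ℝ} {M : ℝ} (ha : Tendsto a l (𝓝 M))
    (ha₀ : ∀ᶠ i in l, 0 ≤ a i) (hb : Tendsto b l atTop) :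
    Tendsto (fun i => ∫ s in (0)..(b i), log (1 + a i * exp (-s))) l
      (𝓝 (∫ s in Ioi 0, log (1 + M * exp (-s)))) := by
  have hM : 0 ≤ M := ge_of_tendsto ha ha₀
  have hlim : Tendsto
      (fun i => ∫ s in Ioi 0, (Iic (b i)).indicator (fun s => log (1 + a i * exp (-s))) s) l
      (𝓝 (∫ s in Ioi 0, log (1 + M * exp (-s)))) := by
    refine tendsto_integral_filter_of_dominated_convergence (fun s => (M + 1) * exp (-s))
      ?_ ?_ ((integrableOn_exp_neg_Ioi 0).const_mul _) ?_
    · filter_upwards [ha₀] with i hi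
      exact ((continuous_log_one_add_mul_exp_neg hi).aestronglyMeasurable).indicator
        measurableSet_Iic
    · filter_upwards [ha₀, ha.eventually (eventually_le_nhds (lt_add_one M))] with i hi₀ hi₁
      refine ae_of_all _ fun s => (norm_indicator_le_norm_self _ _).trans ?_
      rw [norm_of_nonneg (log_one_add_mul_exp_neg_nonneg hi₀ s)]
      exact (log_one_add_mul_exp_neg_le hi₀ s).trans (by gcongr)
    · refine ae_of_all _ fun s => ?_
      have hcont : ContinuousAt (fun x => log (1 + x * exp (-s))) M :=
        (by fun_prop : Continuous fun x => 1 + x * exp (-s)).continuousAt.log (by positivity)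
      refine (hcont.tendsto.comp ha).congr' ?_
      filter_upwards [hb.eventually_ge_atTop s] with i hi
      simp [indicator_of_mem (show s ∈ Iic (b i) from hi)]
  refine hlim.congr' ?_
  filter_upwards [hb.eventually_ge_atTop 0] with i hi
  rw [setIntegral_indicator measurableSet_Iic, Ioi_inter_Iic, intervalIntegral.integral_of_le hi]

lemma tendsto_setIntegral_Ioc_mul_log_one_add_mul_exp_neg_mul {a : ℝ → ℝ} {M : ℝ}
    (ha : Tendsto a atTop (𝓝 M)) (ha₀ : ∀ᶠ η in atTop, 0 ≤ a η) :
    Tendsto (fun η => ∫ t in Ioc 0 1, η * log (1 + a η * exp (-η * t))) atTop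
      (𝓝 (∫ s in Ioi 0, log (1 + M * exp (-s)))) := by
  refine (tendsto_intervalIntegral_log_one_add_mul_exp_neg ha ha₀ tendsto_id).congr fun η => ?_
  rw [← intervalIntegral.integral_of_le zero_le_one]
  simpa [neg_mul] using (intervalIntegral.smul_integral_comp_mul_left
    (fun s => log (1 + a η * exp (-s))) η (a := 0) (b := 1)).symm

lemma exists_pos_Ioi_diff_subset_Ici {u : Set ℝ} (hu : IsOpen u) (h0u : 0 ∈ u) :
    ∃ δ > 0, Ioi 0 \ u ⊆ Ici δ := by
  obtain ⟨δ, hδ, hball⟩ := Metric.isOpen_iff.1 hu 0 h0u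
  refine ⟨δ, hδ, fun t ⟨ht, htu⟩ => ?_⟩
  by_contra hlt
  exact htu (hball (by simpa [abs_of_pos (mem_Ioi.1 ht)] using hlt))

lemma tendsto_mul_exp_neg_mul_atTop {δ : ℝ} (hδ : 0 < δ) :
    Tendsto (fun η => η * exp (-δ * η)) atTop (𝓝 0) := by
  simpa using tendsto_rpow_mul_exp_neg_mul_atTop_nhds_zero 1 δ hδ

lemma tendstoUniformlyOn_mul_log_one_add_mul_exp_neg_mul {a : ℝ → ℝ} {M : ℝ}
    (ha : Tendsto a atTop (𝓝 M)) (ha₀ : ∀ᶠ η in atTop, 0 ≤ a η) {δ : ℝ} (hδ : 0 < δ) :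
    TendstoUniformlyOn (fun η t => η * log (1 + a η * exp (-η * t))) 0 atTop (Ici δ) := by
  have hbound : Tendsto (fun η => (M + 1) * (η * exp (-δ * η))) atTop (𝓝 0) := by
    simpa using (tendsto_mul_exp_neg_mul_atTop hδ).const_mul (M + 1)
  rw [Metric.tendstoUniformlyOn_iff]
  intro ε hε
  filter_upwards [eventually_ge_atTop 0, ha₀, ha.eventually (eventually_le_nhds (lt_add_one M)),
    hbound.eventually (eventually_lt_nhds hε)] with η hη haη₀ haη₁ hηε t ht
  have hlog := log_one_add_mul_exp_neg_nonneg haη₀ (η * t)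
  rw [Pi.zero_apply, dist_zero_left, norm_of_nonneg (by rw [neg_mul]; positivity)]
  refine lt_of_le_of_lt ?_ hηε
  calc η * log (1 + a η * exp (-η * t)) ≤ η * (a η * exp (-(η * t))) := by
        rw [neg_mul]; gcongr; exact log_one_add_mul_exp_neg_le haη₀ _
    _ ≤ η * ((M + 1) * exp (-δ * η)) := by
        gcongr
        · linarith
        · nlinarith [mem_Ici.1 ht]
    _ = (M + 1) * (η * exp (-δ * η)) := by ring

theorem dilog_limit_power_cell_general (h : ℝ → ℝ)
    (hint : IntegrableOn h (Set.Ici (0 : ℝ)))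
    (hcont : ContinuousAt h 0)
    (M : ℝ) (hM : 0 < M) (Mη : ℝ → ℝ) (hMη : Tendsto Mη atTop (nhds M)) :
    Tendsto (fun η : ℝ =>
        η * ∫ t in Set.Ioi (0 : ℝ), Real.log (1 + Mη η * Real.exp (-η * t)) * h t)
      atTop (nhds (h 0 * ∫ t in Set.Ioi (0 : ℝ), Real.log (1 + M * Real.exp (-t)))) := by
  set C := ∫ s in Ioi 0, log (1 + M * exp (-s))
  have hC : 0 < C := integral_log_one_add_mul_exp_neg_pos hM
  have hMη₀ : ∀ᶠ η in atTop, 0 ≤ Mη η :=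
    (hMη.eventually (eventually_gt_nhds hM)).mono fun _ => le_of_lt
  set φ : ℝ → ℝ → ℝ := fun η t => C⁻¹ * (η * log (1 + Mη η * exp (-η * t)))
  have hpeak : Tendsto (fun η => ∫ t in Ioi 0, φ η t • h t) atTop (𝓝 (h 0)) := by
    refine tendsto_setIntegral_peak_smul_of_integrableOn_of_tendsto measurableSet_Ioi
      measurableSet_Ioc Ioc_subset_Ioi_self (Ioc_mem_nhdsGT one_pos) (by simp) ?_ ?_ ?_ ?_
      (hint.mono_set Ioi_subset_Ici_self) (hcont.tendsto.mono_left nhdsWithin_le_nhds)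
    · filter_upwards [eventually_ge_atTop 0, hMη₀] with η hη hη₀ t _
      have hlog : 0 ≤ log (1 + Mη η * exp (-η * t)) := by
        simpa only [neg_mul] using log_one_add_mul_exp_neg_nonneg hη₀ (η * t)
      exact mul_nonneg (inv_nonneg.2 hC.le) (mul_nonneg hη hlog)
    · intro u hu h0u
      obtain ⟨δ, hδ, hsub⟩ := exists_pos_Ioi_diff_subset_Ici hu h0u
      simpa [φ, Function.comp_def, Pi.zero_def] using
        ((uniformContinuous_mul_left' C⁻¹).comp_tendstoUniformlyOn
          (tendstoUniformlyOn_mul_log_one_add_mul_exp_neg_mul hMη hMη₀ hδ)).mono hsub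
    · have hmass :=
        (tendsto_setIntegral_Ioc_mul_log_one_add_mul_exp_neg_mul hMη hMη₀).const_mul C⁻¹
      rw [inv_mul_cancel₀ hC.ne'] at hmass
      simpa [φ, integral_const_mul] using hmass
    · exact Eventually.of_forall fun η => by fun_prop
  have hscaled := hpeak.const_mul C
  rw [mul_comm C (h 0)] at hscaled
  refine hscaled.congr fun η => ?_
  simp only [φ, smul_eq_mul, mul_assoc, integral_const_mul, mul_inv_cancel_left₀ hC.ne']

theorem dilog_limit_power_cell (h : ℝ → ℝ) (hnn : ∀ t, 0 ≤ h t)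
    (hint : IntegrableOn h (Set.Ici (0 : ℝ)))
    (hcont : ContinuousAt h 0)
    (M : ℝ) (hM : 0 < M) (Mη : ℝ → ℝ) (hMη : Tendsto Mη atTop (nhds M)) :
    Tendsto (fun η : ℝ =>
        η * ∫ t in Set.Ioi (0 : ℝ), Real.log (1 + Mη η * Real.exp (-η * t)) * h t)
      atTop (nhds (h 0 * ∫ t in Set.Ioi (0 : ℝ), Real.log (1 + M * Real.exp (-t)))) :=
  dilog_limit_power_cell_general h hint hcont M hM Mη hMη
end

section
/- Let h : ℝ → ℝ be nonnegative, integrable on [0,∞), and continuous at 0. Let c > 0, M > 0, and let M_η (η > 0) be real numbers with M_η → M as η → ∞. Then lim_{η→∞} η²·∫_0^∞ t·M_η·e^{−ηt}/(c + M_η·e^{−ηt})·h(t) dt = h(0)·∫_0^∞ t·M·e^{−t}/(c + M·e^{−t}) dt. -/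
/-!
With `φ_η(s) = M_η e^{-s} / (c + M_η e^{-s})`, substituting `s = η t` turns
`η² ∫ t φ_η(η t) h(t) dt` into `∫ s φ_η(s) h(s / η) ds`, and `s φ_η(s)` is dominated
by a fixed multiple of `e^{-s/2}`. Split `h` at a small `δ`: on `[0, δ)` it is bounded,
so dominated convergence yields `(∫ s φ(s) ds) · h 0`, while the part of `h` supported
on `[δ, ∞)` contributes at most `C e^{-ηδ/2} · η ‖h‖₁ → 0`.
-/

open MeasureTheory Filter Set Real Topology

section ScaledIntegral

variable {F : ℝ → ℝ → ℝ} {F₀ f h : ℝ → ℝ} {C a η : ℝ}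

lemma integrableOn_comp_inv_mul (hh : IntegrableOn h (Ioi 0)) (hη : 0 < η) :
    IntegrableOn (fun s => h (η⁻¹ * s)) (Ioi 0) := by
  simpa using (integrableOn_Ioi_comp_mul_left_iff h 0 (inv_pos.mpr hη)).mpr (by rwa [mul_zero])

lemma integrableOn_mul_comp_inv_mul (ha : 0 ≤ a)
    (hf : AEStronglyMeasurable f (volume.restrict (Ioi 0)))
    (hf_bound : ∀ s > 0, |f s| ≤ C * exp (-a * s))
    (hh : IntegrableOn h (Ioi 0)) (hη : 0 < η) :
    IntegrableOn (fun s => f s * h (η⁻¹ * s)) (Ioi 0) := by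
  refine (integrableOn_comp_inv_mul hh hη).bdd_mul hf (c := C) ?_
  refine (ae_restrict_iff' measurableSet_Ioi).mpr (ae_of_all _ fun s hs => ?_)
  have hC : 0 ≤ C :=
    nonneg_of_mul_nonneg_left ((abs_nonneg _).trans (hf_bound s hs)) (exp_pos _)
  have hexp : exp (-a * s) ≤ 1 := exp_le_one_iff.mpr (by nlinarith [mem_Ioi.mp hs])
  calc ‖f s‖ = |f s| := norm_eq_abs _
    _ ≤ C * exp (-a * s) := hf_bound s hs
    _ ≤ C := mul_le_of_le_one_right hC hexp

lemma tendsto_inv_mul_nhdsGT_zero {s : ℝ} (hs : 0 < s) :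
    Tendsto (fun η : ℝ => η⁻¹ * s) atTop (𝓝[>] 0) := by
  refine tendsto_nhdsWithin_iff.mpr ⟨by simpa using tendsto_inv_atTop_zero.mul_const s, ?_⟩
  filter_upwards [eventually_gt_atTop 0] with η hη using mul_pos (inv_pos.mpr hη) hs

theorem tendsto_integral_mul_comp_inv_mul_of_bounded {G : ℝ → ℝ} {B : ℝ}
    (hF_meas : ∀ᶠ η in atTop, AEStronglyMeasurable (F η) (volume.restrict (Ioi 0)))
    (hF_bound : ∀ᶠ η in atTop, ∀ s > 0, |F η s| ≤ G s) (hG : IntegrableOn G (Ioi 0))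
    (hF_lim : ∀ s > 0, Tendsto (fun η => F η s) atTop (𝓝 (F₀ s)))
    (hh : IntegrableOn h (Ioi 0)) (hh_bound : ∀ t > 0, |h t| ≤ B)
    (hcont : ContinuousWithinAt h (Ioi 0) 0) :
    Tendsto (fun η => ∫ s in Ioi 0, F η s * h (η⁻¹ * s)) atTop
      (𝓝 ((∫ s in Ioi 0, F₀ s) * h 0)) := by
  rw [← integral_mul_const]
  refine tendsto_integral_filter_of_dominated_convergence (fun s => G s * B) ?_ ?_
    (hG.mul_const B) ?_
  · filter_upwards [hF_meas, eventually_gt_atTop 0] with η hFη hη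
    exact hFη.mul (integrableOn_comp_inv_mul hh hη).aestronglyMeasurable
  · filter_upwards [hF_bound, eventually_gt_atTop 0] with η hFη hη
    refine (ae_restrict_iff' measurableSet_Ioi).mpr (ae_of_all _ fun s hs => ?_)
    rw [norm_mul, norm_eq_abs, norm_eq_abs]
    exact mul_le_mul (hFη s hs) (hh_bound _ (mul_pos (inv_pos.mpr hη) hs)) (abs_nonneg _)
      ((abs_nonneg _).trans (hFη s hs))
  · refine (ae_restrict_iff' measurableSet_Ioi).mpr (ae_of_all _ fun s hs => ?_)
    exact (hF_lim s hs).mul (hcont.tendsto.comp (tendsto_inv_mul_nhdsGT_zero hs))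

theorem tendsto_integral_mul_comp_inv_mul_of_eqOn_zero {δ : ℝ} (ha : 0 < a) (hδ : 0 < δ)
    (hF_bound : ∀ᶠ η in atTop, ∀ s > 0, |F η s| ≤ C * exp (-a * s))
    (hh : IntegrableOn h (Ioi 0)) (hh_zero : EqOn h 0 (Ioo 0 δ)) :
    Tendsto (fun η => ∫ s in Ioi 0, F η s * h (η⁻¹ * s)) atTop (𝓝 0) := by
  set I := ∫ t in Ioi 0, |h t|
  have hlim : Tendsto (fun η : ℝ => C * I * (η * exp (-(a * δ) * η))) atTop (𝓝 0) := by
    simpa using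
      (tendsto_rpow_mul_exp_neg_mul_atTop_nhds_zero 1 _ (mul_pos ha hδ)).const_mul (C * I)
  refine squeeze_zero_norm' ?_ hlim
  filter_upwards [hF_bound, eventually_gt_atTop 0] with η hFη hη
  have hpoint : ∀ s > 0,
      ‖F η s * h (η⁻¹ * s)‖ ≤ C * exp (-(a * δ) * η) * |h (η⁻¹ * s)| := by
    intro s hs
    rw [norm_mul, norm_eq_abs, norm_eq_abs]
    by_cases hsδ : η⁻¹ * s < δ
    · simp [hh_zero ⟨mul_pos (inv_pos.mpr hη) hs, hsδ⟩]
    refine mul_le_mul_of_nonneg_right ((hFη s hs).trans ?_) (abs_nonneg _)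
    have hC : 0 ≤ C :=
      nonneg_of_mul_nonneg_left ((abs_nonneg _).trans (hFη s hs)) (exp_pos _)
    have hηδ : η * δ ≤ s := by
      rwa [not_lt, le_inv_mul_iff₀ hη] at hsδ
    exact mul_le_mul_of_nonneg_left (exp_le_exp.mpr (by nlinarith)) hC
  calc ‖∫ s in Ioi 0, F η s * h (η⁻¹ * s)‖
      ≤ ∫ s in Ioi 0, C * exp (-(a * δ) * η) * |h (η⁻¹ * s)| :=
        norm_integral_le_of_norm_le ((integrableOn_comp_inv_mul hh hη).abs.const_mul _)
          ((ae_restrict_iff' measurableSet_Ioi).mpr (ae_of_all _ hpoint))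
    _ = C * I * (η * exp (-(a * δ) * η)) := by
        rw [integral_const_mul, integral_comp_mul_left_Ioi (fun t => |h t|) 0 (inv_pos.mpr hη)]
        simp only [mul_zero, inv_inv, smul_eq_mul]
        ring

theorem tendsto_integral_mul_comp_inv_mul (ha : 0 < a)
    (hF_meas : ∀ᶠ η in atTop, AEStronglyMeasurable (F η) (volume.restrict (Ioi 0)))
    (hF_bound : ∀ᶠ η in atTop, ∀ s > 0, |F η s| ≤ C * exp (-a * s))
    (hF_lim : ∀ s > 0, Tendsto (fun η => F η s) atTop (𝓝 (F₀ s)))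
    (hh : IntegrableOn h (Ioi 0)) (hcont : ContinuousWithinAt h (Ioi 0) 0) :
    Tendsto (fun η => ∫ s in Ioi 0, F η s * h (η⁻¹ * s)) atTop
      (𝓝 ((∫ s in Ioi 0, F₀ s) * h 0)) := by
  obtain ⟨δ, hδ, hδh⟩ := Metric.continuousWithinAt_iff.mp hcont 1 one_pos
  have hnear_bound : ∀ t > 0, |(Iio δ).indicator h t| ≤ |h 0| + 1 := by
    intro t ht
    by_cases htδ : t < δ
    · have hdist := hδh ht (by rwa [Real.dist_eq, sub_zero, abs_of_pos ht])
      rw [Real.dist_eq] at hdist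
      rw [indicator_of_mem (mem_Iio.mpr htδ)]
      linarith [abs_sub_abs_le_abs_sub (h t) (h 0)]
    · rw [indicator_of_notMem (show t ∉ Iio δ from htδ), abs_zero]
      positivity
  have hnear_eq : (Iio δ).indicator h =ᶠ[𝓝 0] h :=
    eventually_of_mem (Iio_mem_nhds hδ) fun t ht => indicator_of_mem ht h
  have hnear := tendsto_integral_mul_comp_inv_mul_of_bounded hF_meas hF_bound
    ((exp_neg_integrableOn_Ioi 0 ha).const_mul C) hF_lim (hh.indicator measurableSet_Iio)
    hnear_bound (hcont.congr_of_eventuallyEq (nhdsWithin_le_nhds hnear_eq) hnear_eq.eq_of_nhds)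
  have hfar := tendsto_integral_mul_comp_inv_mul_of_eqOn_zero ha hδ hF_bound
    (hh.indicator measurableSet_Ici) fun t ht => indicator_of_notMem (not_le.mpr ht.2) h
  rw [hnear_eq.eq_of_nhds] at hnear
  refine (add_zero ((∫ s in Ioi 0, F₀ s) * h 0) ▸ hnear.add hfar).congr' ?_
  filter_upwards [hF_meas, hF_bound, eventually_gt_atTop 0] with η hFη_meas hFη hη
  rw [← integral_add
    (integrableOn_mul_comp_inv_mul ha.le hFη_meas hFη (hh.indicator measurableSet_Iio) hη)
    (integrableOn_mul_comp_inv_mul ha.le hFη_meas hFη (hh.indicator measurableSet_Ici) hη)]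
  simp only [← mul_add, ← compl_Iio, indicator_self_add_compl_apply]

end ScaledIntegral

lemma sq_mul_integral_Ioi_mul_comp_mul (k h : ℝ → ℝ) {η : ℝ} (hη : 0 < η) :
    η ^ 2 * ∫ t in Ioi 0, t * k (η * t) * h t = ∫ s in Ioi 0, s * k s * h (η⁻¹ * s) := by
  have hsubst := integral_comp_mul_left_Ioi (fun s => s * k s * h (η⁻¹ * s)) 0 hη
  simp only [mul_zero, inv_mul_cancel_left₀ hη.ne', smul_eq_mul] at hsubst
  calc η ^ 2 * ∫ t in Ioi 0, t * k (η * t) * h t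
      = η * ∫ t in Ioi 0, η * t * k (η * t) * h t := by
        simp only [mul_assoc, integral_const_mul]
        ring
    _ = ∫ s in Ioi 0, s * k s * h (η⁻¹ * s) := by
        rw [hsubst, mul_inv_cancel_left₀ hη.ne']

lemma mul_exp_neg_le (s : ℝ) : s * exp (-s) ≤ 2 * exp (-2⁻¹ * s) := by
  have hs : s ≤ 2 * exp (2⁻¹ * s) := by linarith [add_one_le_exp (2⁻¹ * s)]
  calc s * exp (-s) ≤ 2 * exp (2⁻¹ * s) * exp (-s) := by gcongr
    _ = 2 * exp (-2⁻¹ * s) := by rw [mul_assoc, ← exp_add]; ring_nf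

noncomputable def sigmoidWeight (c m s : ℝ) : ℝ := m * exp (-s) / (c + m * exp (-s))

section SigmoidWeight

variable {c m : ℝ}

lemma sigmoidWeight_denom_pos (hc : 0 < c) (hm : 0 ≤ m) (s : ℝ) : 0 < c + m * exp (-s) := by
  positivity

lemma continuous_sigmoidWeight (hc : 0 < c) (hm : 0 ≤ m) : Continuous (sigmoidWeight c m) :=
  Continuous.div (by fun_prop) (by fun_prop) fun s => (sigmoidWeight_denom_pos hc hm s).ne'

lemma sigmoidWeight_nonneg (hc : 0 < c) (hm : 0 ≤ m) (s : ℝ) : 0 ≤ sigmoidWeight c m s :=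
  div_nonneg (by positivity) (sigmoidWeight_denom_pos hc hm s).le

lemma sigmoidWeight_le (hc : 0 < c) (hm : 0 ≤ m) (s : ℝ) :
    sigmoidWeight c m s ≤ m / c * exp (-s) := by
  rw [div_mul_eq_mul_div]
  exact div_le_div_of_nonneg_left (by positivity) hc
    (le_add_of_nonneg_right (mul_nonneg hm (exp_pos (-s)).le))

lemma abs_mul_sigmoidWeight_le (hc : 0 < c) (hm : 0 ≤ m) {s : ℝ} (hs : 0 ≤ s) :
    |s * sigmoidWeight c m s| ≤ 2 * m / c * exp (-2⁻¹ * s) := by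
  rw [abs_of_nonneg (mul_nonneg hs (sigmoidWeight_nonneg hc hm s))]
  calc s * sigmoidWeight c m s ≤ s * (m / c * exp (-s)) := by
        gcongr; exact sigmoidWeight_le hc hm s
    _ = m / c * (s * exp (-s)) := by ring
    _ ≤ m / c * (2 * exp (-2⁻¹ * s)) :=
        mul_le_mul_of_nonneg_left (mul_exp_neg_le s) (by positivity)
    _ = 2 * m / c * exp (-2⁻¹ * s) := by ring

lemma tendsto_sigmoidWeight {ι : Type*} {l : Filter ι} {m : ι → ℝ} {M : ℝ}
    (hc : 0 < c) (hM : 0 ≤ M) (hm : Tendsto m l (𝓝 M)) (s : ℝ) :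
    Tendsto (fun i => sigmoidWeight c (m i) s) l (𝓝 (sigmoidWeight c M s)) :=
  (hm.mul_const _).div (tendsto_const_nhds.add (hm.mul_const _))
    (sigmoidWeight_denom_pos hc hM s).ne'

end SigmoidWeight

theorem sigmoid_slack_limit_general (h : ℝ → ℝ)
    (hint : IntegrableOn h (Set.Ici (0 : ℝ)))
    (hcont : ContinuousAt h 0)
    (c : ℝ) (hc : 0 < c) (M : ℝ) (hM : 0 < M)
    (Mη : ℝ → ℝ) (hMη : Tendsto Mη atTop (nhds M)) :
    Tendsto (fun η : ℝ =>
        η ^ 2 * ∫ t in Set.Ioi (0 : ℝ),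
          t * Mη η * Real.exp (-η * t) / (c + Mη η * Real.exp (-η * t)) * h t)
      atTop (nhds (h 0 * ∫ t in Set.Ioi (0 : ℝ),
          t * M * Real.exp (-t) / (c + M * Real.exp (-t)))) := by
  have hMη_mem : ∀ᶠ η in atTop, Mη η ∈ Icc 0 (2 * M) :=
    hMη (Icc_mem_nhds (by linarith) (by linarith))
  have hlim := tendsto_integral_mul_comp_inv_mul
    (F := fun η s => s * sigmoidWeight c (Mη η) s) (C := 2 * (2 * M) / c)
    (by norm_num : (0 : ℝ) < 2⁻¹)
    (hMη_mem.mono fun η hm =>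
      (continuous_id.mul (continuous_sigmoidWeight hc hm.1)).aestronglyMeasurable)
    (hMη_mem.mono fun η hm s hs =>
      (abs_mul_sigmoidWeight_le hc hm.1 hs.le).trans (by gcongr; exact hm.2))
    (fun s _ => (tendsto_sigmoidWeight hc hM.le hMη s).const_mul s)
    (hint.mono_set Ioi_subset_Ici_self) hcont.continuousWithinAt
  have hlimit_integral : ∫ t in Ioi 0, t * M * exp (-t) / (c + M * exp (-t))
      = ∫ s in Ioi 0, s * sigmoidWeight c M s := by
    congr 1 with t
    simp only [sigmoidWeight]
    ring
  rw [mul_comm (h 0), hlimit_integral]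
  refine hlim.congr' ?_
  filter_upwards [eventually_gt_atTop 0] with η hη
  rw [← sq_mul_integral_Ioi_mul_comp_mul _ h hη]
  congr 2 with t
  simp only [sigmoidWeight, neg_mul]
  ring

theorem sigmoid_slack_limit (h : ℝ → ℝ) (hnn : ∀ t, 0 ≤ h t)
    (hint : IntegrableOn h (Set.Ici (0 : ℝ)))
    (hcont : ContinuousAt h 0)
    (c : ℝ) (hc : 0 < c) (M : ℝ) (hM : 0 < M)
    (Mη : ℝ → ℝ) (hMη : Tendsto Mη atTop (nhds M)) :
    Tendsto (fun η : ℝ =>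
        η ^ 2 * ∫ t in Set.Ioi (0 : ℝ),
          t * Mη η * Real.exp (-η * t) / (c + Mη η * Real.exp (-η * t)) * h t)
      atTop (nhds (h 0 * ∫ t in Set.Ioi (0 : ℝ),
          t * M * Real.exp (-t) / (c + M * Real.exp (-t)))) :=
  sigmoid_slack_limit_general h hint hcont c hc M hM Mη hMη
end
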